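/- arXiv:2006.10826 — 3 statements merged into one kernel-verified Lean document; each statement's English description precedes it below -/
import Mathlib

section
/- With Φ_k defined as in the paper, and with a_1 = 1, a_l = h + l, l ≥ 1, t ≥ 1, x ≥ 1, the ratio Φ_k((a_j)_{j=1}^{l-1}; t-1, x+1, h) · Φ_k((a_j)_{j=1}^l; t, x-1, h) / ( Φ_k((a_j)_{j=1}^{l-1}; t-1, x, h) · Φ_k((a_j)_{j=1}^l; t, x, h) ) equals x·((k+1)x+(k+1)h+t) / ( ((k+1)(x+l+h-1)+t)·(x+t+k(l-1)+(k+1)h) ). -/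
open Finset

/-- The Pochhammer symbol `(y)_n` for an integer index `n`:
`(y)_n = y(y+1)⋯(y+n-1)` for `n > 0`, `(y)_0 = 1`, and
`(y)_n = 1/((y-1)(y-2)⋯(y+n))` for `n < 0`. -/
noncomputable def poch (y : ℚ) (n : ℤ) : ℚ :=
  if 0 ≤ n then ∏ i ∈ Finset.range n.toNat, (y + i)
  else (∏ i ∈ Finset.range (-n).toNat, (y - 1 - i))⁻¹

/-- The function `Φ_k((a_i)_{i=1}^l; t, x, h)` from the paper: a product of ratios of
Pochhammer symbols.  Here `k, l : ℕ`, the dent positions are `a 1, …, a l`, and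
`t, x, h` are integer parameters.  Empty products are `1`. -/
noncomputable def Phi (k l : ℕ) (a : ℕ → ℤ) (t x h : ℤ) : ℚ :=
  (∏ i ∈ Finset.Icc 1 l,
      poch ((x + h + (l : ℤ) + 1 - a i : ℤ) : ℚ) (t + ((k : ℤ) + 1) * a i - (l : ℤ) - (k : ℤ))
        / poch ((h + (l : ℤ) + 1 - a i : ℤ) : ℚ) (t + ((k : ℤ) + 1) * a i - (l : ℤ) - (k : ℤ)))
  * (∏ j ∈ Finset.Icc 1 (k - 1), ∏ i ∈ Finset.Icc 1 ((l + k - j) / (k + 1)),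
      poch ((((k : ℤ) + 1) * (x + h) + t + (k : ℤ) * ((k : ℤ) + 1) * (i : ℤ)
              + ((j : ℤ) - 1) * (k : ℤ) - ((k : ℤ) + 1) * ((k : ℤ) - 1) : ℤ) : ℚ) (j : ℤ)
        / poch ((((k : ℤ) + 1) * h + t + (k : ℤ) * ((k : ℤ) + 1) * (i : ℤ)
              + ((j : ℤ) - 1) * (k : ℤ) - ((k : ℤ) + 1) * ((k : ℤ) - 1) : ℤ) : ℚ) (j : ℤ))
  * (∏ i ∈ Finset.Icc 1 (l / (k + 1)),
      poch ((((k : ℤ) + 1) * (x + h) + t + (k : ℤ) * ((k : ℤ) + 1) * (i : ℤ) - (k : ℤ) + 1 : ℤ) : ℚ)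
          (((k : ℤ) + 1) * (l : ℤ) + (k : ℤ) - ((k : ℤ) + 1) ^ 2 * (i : ℤ))
        / poch ((((k : ℤ) + 1) * h + t + (k : ℤ) * ((k : ℤ) + 1) * (i : ℤ) - (k : ℤ) + 1 : ℤ) : ℚ)
          (((k : ℤ) + 1) * (l : ℤ) + (k : ℤ) - ((k : ℤ) + 1) ^ 2 * (i : ℤ)))

/-!
The second and third products of `Φ_k` depend on `x` only through `w = (k+1)(x+h)+t`, and their
numerators multiply to `∏_{m<l} (w+km+1)_m`: passing from `l` to `l+1` adds exactly the factors
`w+kl+1, …, w+(k+1)l`, spread over one new or lengthened Pochhammer symbol per product.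
Hence `Φ_k(l; t, x, h) = N(x+h) / N(h)`, where `N(v)` is the product of the three numerators.
The first product for `(l-1, t-1)` at `x+1` consists of the first `l-1` factors of that for
`(l, t)` at `x`; so if `a_l = h + l`, then `N` for `(l, t)` at `x+h` is `N` for `(l-1, t-1)` at
`x+h+1` times `(x+1)_n ∏_{j<l-1} (w+(k+1)(j+1))`, `n = t+(k+1)h+k(l-1)`. In the ratio all values
of `N` cancel, leaving the telescoping quotients `(x)_n / (x+1)_n = x / (x+n)` and
`w / (w+(k+1)(l-1))`.
-/

open Polynomial

section Pochhammer

variable {S : Type*} [CommSemiring S]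

theorem ascPochhammer_eval_eq_prod_range (n : ℕ) (y : S) :
    (ascPochhammer S n).eval y = ∏ i ∈ range n, (y + i) := by
  induction n with
  | zero => simp
  | succ n ih => rw [ascPochhammer_succ_eval, ih, prod_range_succ]

theorem ascPochhammer_eval_add (n m : ℕ) (y : S) :
    (ascPochhammer S (n + m)).eval y
      = (ascPochhammer S n).eval y * (ascPochhammer S m).eval (y + n) := by
  rw [← ascPochhammer_mul, eval_mul, eval_comp, eval_add, eval_X, eval_natCast]

theorem ascPochhammer_eval_mul_add (n : ℕ) (y : S) :
    (ascPochhammer S n).eval y * (y + n) = y * (ascPochhammer S n).eval (y + 1) := by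
  rw [← ascPochhammer_succ_eval, ascPochhammer_succ_left, eval_mul, eval_comp, eval_add, eval_X,
    eval_one]

theorem ascPochhammer_eval_add_mul (r n d : ℕ) (y : S) :
    (ascPochhammer S (r + n * d)).eval y
      = (ascPochhammer S r).eval y * ∏ i ∈ range d, (ascPochhammer S n).eval (y + r + n * i) := by
  induction d with
  | zero => simp
  | succ d ih =>
    rw [mul_add, mul_one, ← add_assoc, ascPochhammer_eval_add, ih, prod_range_succ, mul_assoc,
      Nat.cast_add, Nat.cast_mul, ← add_assoc]

end Pochhammer

theorem poch_natCast (y : ℚ) (n : ℕ) : poch y n = (ascPochhammer ℚ n).eval y := by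
  simp [poch, ascPochhammer_eval_eq_prod_range]

theorem poch_of_nonneg (y : ℚ) {n : ℤ} (hn : 0 ≤ n) :
    poch y n = (ascPochhammer ℚ n.toNat).eval y := by
  rw [← poch_natCast, Int.toNat_of_nonneg hn]

theorem poch_mul_add (y : ℚ) {n : ℤ} (hn : 0 ≤ n) : poch y n * (y + n) = y * poch (y + 1) n := by
  rw [poch_of_nonneg y hn, poch_of_nonneg _ hn, ← ascPochhammer_eval_mul_add]
  congr 2
  exact_mod_cast (Int.toNat_of_nonneg hn).symm

theorem poch_pos {y : ℚ} {n : ℤ} (hy : 0 < y) (hyn : 0 < y + n) : 0 < poch y n := by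
  rcases le_or_gt 0 n with hn | hn
  · rw [poch_of_nonneg y hn]
    exact ascPochhammer_pos _ _ hy
  · rw [poch, if_neg hn.not_ge]
    refine inv_pos.mpr (prod_pos fun i hi => ?_)
    have hi : (i : ℚ) ≤ -n - 1 := by
      rw [mem_range] at hi
      exact_mod_cast (by omega : (i : ℤ) ≤ -n - 1)
    linarith

theorem prod_Icc_one_succ_div {M : Type*} [CommMonoid M] (f : ℕ → M) (a b : ℕ) :
    ∏ i ∈ Icc 1 ((a + 1) / b), f i
      = (∏ i ∈ Icc 1 (a / b), f i) * if b ∣ a + 1 then f ((a + 1) / b) else 1 := by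
  rw [Nat.succ_div]
  split_ifs
  · exact prod_Icc_succ_top (Nat.le_add_left 1 _) f
  · simp

theorem dvd_add_iff_mod_add_eq {n l s : ℕ} (hs : 0 < s) (hsn : s ≤ n) :
    n ∣ l + s ↔ l % n + s = n := by
  have hl := Nat.div_add_mod l n
  have hr := Nat.mod_lt l (by omega : 0 < n)
  rw [show l + s = n * (l / n) + (l % n + s) by omega, Nat.dvd_add_right (dvd_mul_right _ _)]
  exact ⟨fun h => Nat.eq_of_dvd_of_lt_two_mul (by omega) h (by omega), fun h => by rw [h]⟩

theorem add_div_of_mod_add_eq {n l s : ℕ} (hn : 0 < n) (h : l % n + s = n) :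
    (l + s) / n = l / n + 1 := by
  have hl := Nat.div_add_mod l n
  rw [show l + s = n * (l / n + 1) by rw [mul_add]; omega, Nat.mul_div_cancel_left _ hn]

theorem sq_mul_le_mul_of_le_div {k l i : ℕ} (hi : i ≤ l / (k + 1)) :
    (k + 1) ^ 2 * i ≤ (k + 1) * l := by
  rw [sq, mul_assoc]
  exact Nat.mul_le_mul_left _ ((Nat.le_div_iff_mul_le (by omega)).mp hi |>.trans_eq' (mul_comm _ _))

/-- The numerator of the second product of `Φ_k`, as a function of `w = (k+1)(x+h)+t`; its
denominator is the same function at `x = 0`. -/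
noncomputable def phiNum₂ (k l : ℕ) (w : ℚ) : ℚ :=
  ∏ j ∈ Icc 1 (k - 1), ∏ i ∈ Icc 1 ((l + k - j) / (k + 1)),
    (ascPochhammer ℚ j).eval (w + k * (k + 1) * i + (j - 1) * k - (k + 1) * (k - 1))

/-- The numerator of the third product of `Φ_k`, as a function of `w = (k+1)(x+h)+t`. -/
noncomputable def phiNum₃ (k l : ℕ) (w : ℚ) : ℚ :=
  ∏ i ∈ Icc 1 (l / (k + 1)),
    (ascPochhammer ℚ ((k + 1) * l + k - (k + 1) ^ 2 * i)).eval (w + k * (k + 1) * i - k + 1)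

noncomputable def pochStack (k l : ℕ) (w : ℚ) : ℚ :=
  ∏ m ∈ range l, (ascPochhammer ℚ m).eval (w + k * m + 1)

/-- The `j`-th inner product gains its factor exactly when `j ≡ l (mod k+1)`. -/
theorem phiNum₂_succ (k l : ℕ) (w : ℚ) :
    phiNum₂ k (l + 1) w = phiNum₂ k l w *
      if l % (k + 1) = k then 1 else (ascPochhammer ℚ (l % (k + 1))).eval (w + k * l + 1) := by
  set r := l % (k + 1)
  have hrk : r < k + 1 := Nat.mod_lt _ (by omega)
  have hl : (l : ℚ) = (k + 1) * (l / (k + 1) : ℕ) + r := by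
    exact_mod_cast (Nat.div_add_mod l (k + 1)).symm
  have step : ∀ j ∈ Icc 1 (k - 1),
      ∏ i ∈ Icc 1 ((l + 1 + k - j) / (k + 1)),
        (ascPochhammer ℚ j).eval (w + k * (k + 1) * i + (j - 1) * k - (k + 1) * (k - 1))
      = (∏ i ∈ Icc 1 ((l + k - j) / (k + 1)),
          (ascPochhammer ℚ j).eval (w + k * (k + 1) * i + (j - 1) * k - (k + 1) * (k - 1)))
        * if j = r then (ascPochhammer ℚ j).eval (w + k * l + 1) else 1 := by
    intro j hj
    rw [mem_Icc] at hj
    have hs : l + k - j + 1 = l + (k + 1 - j) := by omega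
    rw [show l + 1 + k - j = l + k - j + 1 by omega, prod_Icc_one_succ_div, hs]
    simp only [dvd_add_iff_mod_add_eq (n := k + 1) (s := k + 1 - j) (by omega) (by omega)]
    by_cases hjr : j = r
    · rw [if_pos (by omega), if_pos hjr, add_div_of_mod_add_eq (by omega) (by omega)]
      congr 3
      rw [hl, ← hjr]
      push_cast
      ring
    · rw [if_neg (by omega), if_neg hjr]
  rw [phiNum₂, phiNum₂, prod_congr rfl step, prod_mul_distrib, prod_ite_eq']
  congr 1
  by_cases hr0 : r = 0
  · simp [hr0]
  by_cases hrk' : r = k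
  · rw [if_neg (by rw [mem_Icc]; omega), if_pos hrk']
  · rw [if_pos (mem_Icc.2 ⟨by omega, by omega⟩), if_neg hrk']

/-- Every symbol grows by `k+1` factors at its top end, and a new symbol of length `k` appears
when `k+1 ∣ l+1`. -/
theorem phiNum₃_succ (k l : ℕ) (w : ℚ) :
    phiNum₃ k (l + 1) w = phiNum₃ k l w
      * (∏ i ∈ range (l / (k + 1)),
          (ascPochhammer ℚ (k + 1)).eval (w + k * l + 1 + (l % (k + 1) : ℕ) + (k + 1 : ℕ) * i))
      * if l % (k + 1) = k then (ascPochhammer ℚ k).eval (w + k * l + 1) else 1 := by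
  rw [phiNum₃, phiNum₃, prod_Icc_one_succ_div]
  simp only [dvd_add_iff_mod_add_eq (n := k + 1) (s := 1) one_pos (by omega), add_left_inj]
  set d := l / (k + 1) with hd
  set r := l % (k + 1)
  have hdr : (k + 1) * d + r = l := Nat.div_add_mod l (k + 1)
  have hl : (l : ℚ) = (k + 1) * d + r := by exact_mod_cast hdr.symm
  have hle : ∀ i ∈ Icc 1 d, (k + 1) ^ 2 * i ≤ (k + 1) * l + k := fun i hi =>
    (sq_mul_le_mul_of_le_div (mem_Icc.1 hi).2).trans (Nat.le_add_right _ k)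
  have hlen : ∀ i ∈ Icc 1 d,
      (k + 1) * (l + 1) + k - (k + 1) ^ 2 * i = ((k + 1) * l + k - (k + 1) ^ 2 * i) + (k + 1) :=
    fun i hi => by rw [mul_add_one, add_right_comm, Nat.sub_add_comm (hle i hi)]
  rw [prod_congr rfl fun i hi => by rw [hlen i hi, ascPochhammer_eval_add], prod_mul_distrib]
  congr 1
  · congr 1
    refine prod_nbij' (fun i => d - i) (fun i => d - i) ?_ ?_ ?_ ?_ fun i hi => ?_
    any_goals (simp only [mem_Icc, mem_range]; omega)
    push_cast [Nat.cast_sub (hle i hi), Nat.cast_sub (mem_Icc.1 hi).2]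
    rw [hl]
    congr 1
    ring
  · split_ifs with hrk
    · have hl1 : l + 1 = (k + 1) * (d + 1) := by rw [mul_add]; omega
      rw [add_div_of_mod_add_eq (by omega) (by omega), ← hd,
        show (k + 1) * (l + 1) + k - (k + 1) ^ 2 * (d + 1) = k by rw [hl1]; ring_nf; omega, hl,
        show (r : ℚ) = k by exact_mod_cast (by omega : r = k)]
      push_cast
      congr 1
      ring
    · rfl

theorem phiNum₂_mul_phiNum₃ (k l : ℕ) (w : ℚ) :
    phiNum₂ k l w * phiNum₃ k l w = pochStack k l w := by
  induction l with
  | zero => simp [phiNum₂, phiNum₃, pochStack]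
  | succ l ih =>
    have hblocks :=
      ascPochhammer_eval_add_mul (l % (k + 1)) (k + 1) (l / (k + 1)) (w + k * l + 1)
    rw [Nat.mod_add_div] at hblocks
    rw [phiNum₂_succ, phiNum₃_succ, pochStack, prod_range_succ, ← pochStack, ← ih, hblocks]
    split_ifs with hr
    · rw [hr]
      ring
    · ring

theorem pochStack_succ (k l : ℕ) (w : ℚ) :
    pochStack k (l + 1) w = pochStack k l (w + k) * ∏ j ∈ range l, (w + (k + 1) * (j + 1)) := by
  rw [pochStack, prod_range_succ', pochStack, ← prod_mul_distrib]
  simp only [ascPochhammer_zero, eval_one, mul_one]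
  refine prod_congr rfl fun j _ => ?_
  rw [ascPochhammer_succ_eval, show w + k * (j + 1 : ℕ) + 1 = w + k + k * j + 1 by push_cast; ring]
  ring

theorem pochStack_pos (k l : ℕ) {w : ℚ} (hw : 0 ≤ w) : 0 < pochStack k l w :=
  prod_pos fun _ _ => ascPochhammer_pos _ _ (by positivity)

/-- The numerator of the first product of `Φ_k`, as a function of `v = x + h`; its denominator is
the same function at `v = h`. -/
noncomputable def phiNum₁ (k l : ℕ) (a : ℕ → ℤ) (t v : ℤ) : ℚ :=
  ∏ i ∈ Icc 1 l, poch ((v + l + 1 - a i : ℤ) : ℚ) (t + (k + 1) * a i - l - k)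

noncomputable def phiNumer (k l : ℕ) (a : ℕ → ℤ) (t v : ℤ) : ℚ :=
  phiNum₁ k l a t v * pochStack k l (((k + 1) * v + t : ℤ) : ℚ)

theorem prod_prod_poch_eq_phiNum₂ (k l : ℕ) (w : ℤ) :
    ∏ j ∈ Icc 1 (k - 1), ∏ i ∈ Icc 1 ((l + k - j) / (k + 1)),
      poch ((w + k * (k + 1) * (i : ℤ) + ((j : ℤ) - 1) * k - (k + 1) * (k - 1) : ℤ) : ℚ) (j : ℤ)
      = phiNum₂ k l w := by
  refine prod_congr rfl fun j _ => prod_congr rfl fun i _ => ?_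
  rw [poch_natCast]
  push_cast
  rfl

theorem prod_poch_eq_phiNum₃ (k l : ℕ) (w : ℤ) :
    ∏ i ∈ Icc 1 (l / (k + 1)),
      poch ((w + k * (k + 1) * (i : ℤ) - k + 1 : ℤ) : ℚ)
        ((k + 1) * (l : ℤ) + k - (k + 1) ^ 2 * (i : ℤ))
      = phiNum₃ k l w := by
  refine prod_congr rfl fun i hi => ?_
  have hle := sq_mul_le_mul_of_le_div (mem_Icc.1 hi).2
  rw [show (k + 1) * (l : ℤ) + k - (k + 1) ^ 2 * (i : ℤ) = ((k + 1) * l + k - (k + 1) ^ 2 * i : ℕ)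
    by push_cast [hle.trans (Nat.le_add_right _ k)]; ring, poch_natCast]
  push_cast
  rfl

theorem Phi_eq_div (k l : ℕ) (a : ℕ → ℤ) (t x h : ℤ) :
    Phi k l a t x h = phiNumer k l a t (x + h) / phiNumer k l a t h := by
  rw [Phi, prod_div_distrib, prod_div_distrib,
    prod_congr rfl fun j _ => prod_div_distrib (s := Icc 1 ((l + k - j) / (k + 1))) _ _,
    prod_div_distrib, prod_prod_poch_eq_phiNum₂, prod_prod_poch_eq_phiNum₂, prod_poch_eq_phiNum₃,
    prod_poch_eq_phiNum₃, phiNumer, phiNumer, phiNum₁, phiNum₁, ← phiNum₂_mul_phiNum₃,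
    ← phiNum₂_mul_phiNum₃]
  ring

theorem phiNum₁_pos (k l : ℕ) (a : ℕ → ℤ) {t v : ℤ} (hvt : 0 ≤ v + t)
    (ha : ∀ i ∈ Icc 1 l, 1 ≤ a i ∧ a i ≤ v + l) : 0 < phiNum₁ k l a t v := by
  refine prod_pos fun i hi => poch_pos ?_ ?_
  · exact_mod_cast (by linarith [(ha i hi).2] : (0 : ℤ) < v + l + 1 - a i)
  · have : (k : ℤ) * 1 ≤ k * a i := mul_le_mul_of_nonneg_left (ha i hi).1 (by positivity)
    exact_mod_cast (by linarith : (0 : ℤ) < v + l + 1 - a i + (t + (k + 1) * a i - l - k))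

theorem phiNumer_pos (k l : ℕ) (a : ℕ → ℤ) {t v : ℤ} (hv : 0 ≤ v) (ht : 0 ≤ t)
    (ha : ∀ i ∈ Icc 1 l, 1 ≤ a i ∧ a i ≤ v + l) : 0 < phiNumer k l a t v :=
  mul_pos (phiNum₁_pos k l a (by omega) ha) (pochStack_pos k l (by positivity))

theorem Phi_pos (k l : ℕ) (a : ℕ → ℤ) {t x h : ℤ} (hx : 0 ≤ x) (hh : 0 ≤ h) (ht : 0 ≤ t)
    (ha : ∀ i ∈ Icc 1 l, 1 ≤ a i ∧ a i ≤ h + l) : 0 < Phi k l a t x h := by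
  rw [Phi_eq_div]
  refine div_pos (phiNumer_pos k l a (by omega) ht fun i hi => ?_) (phiNumer_pos k l a hh ht ha)
  exact ⟨(ha i hi).1, by linarith [(ha i hi).2]⟩

theorem phiNum₁_peel (k : ℕ) {l : ℕ} (hl : 1 ≤ l) (a : ℕ → ℤ) (t v : ℤ) :
    phiNum₁ k l a t v = phiNum₁ k (l - 1) a (t - 1) (v + 1)
      * poch ((v + l + 1 - a l : ℤ) : ℚ) (t + (k + 1) * a l - l - k) := by
  obtain ⟨m, rfl⟩ : ∃ m, l = m + 1 := ⟨l - 1, by omega⟩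
  rw [phiNum₁, phiNum₁, prod_Icc_succ_top (by omega), Nat.add_sub_cancel]
  congr 1
  refine prod_congr rfl fun i _ => ?_
  congr 1 <;> push_cast <;> ring

/-- Up to a factor independent of `x`, this is `Φ_k(l; t, x, h) / Φ_k(l-1; t-1, x+1, h)` when
`a_l = h + l`. -/
noncomputable def peelFactor (k l : ℕ) (t h x : ℤ) : ℚ :=
  poch ((x + 1 : ℤ) : ℚ) (t + (k + 1) * (h + l) - l - k)
    * ∏ j ∈ range (l - 1), ((((k + 1) * (x + h) + t : ℤ) : ℚ) + (k + 1) * (j + 1))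

theorem phiNumer_peel (k : ℕ) {l : ℕ} (hl : 1 ≤ l) {a : ℕ → ℤ} {h : ℤ} (hal : a l = h + l)
    (t x : ℤ) :
    phiNumer k l a t (x + h)
      = phiNumer k (l - 1) a (t - 1) (x + h + 1) * peelFactor k l t h x := by
  obtain ⟨m, rfl⟩ : ∃ m, l = m + 1 := ⟨l - 1, by omega⟩
  rw [phiNumer, phiNumer, phiNum₁_peel k hl, pochStack_succ, peelFactor, hal, Nat.add_sub_cancel,
    show ((((k + 1) * (x + h + 1) + (t - 1) : ℤ)) : ℚ) = (((k + 1) * (x + h) + t : ℤ) : ℚ) + k by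
      push_cast; ring,
    show x + h + ((m + 1 : ℕ) : ℤ) + 1 - (h + ((m + 1 : ℕ) : ℤ)) = x + 1 by ring]
  ring

theorem peelFactor_sub_one (k : ℕ) {l : ℕ} (hl : 1 ≤ l) {t h : ℤ}
    (hn : 0 ≤ t + (k + 1) * (h + l) - l - k) (x : ℤ) :
    peelFactor k l t h (x - 1) * (((k : ℚ) + 1) * ((x : ℚ) + l + h - 1) + t)
        * ((x : ℚ) + t + k * ((l : ℚ) - 1) + (k + 1) * h)
      = peelFactor k l t h x * x * (((k : ℚ) + 1) * x + (k + 1) * h + t) := by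
  obtain ⟨m, rfl⟩ : ∃ m, l = m + 1 := ⟨l - 1, by omega⟩
  have hpoch := poch_mul_add (x : ℚ) hn
  rw [peelFactor, peelFactor, Nat.add_sub_cancel, sub_add_cancel,
    show ((x + 1 : ℤ) : ℚ) = x + 1 by push_cast; ring]
  set w : ℚ := (((k + 1) * (x + h) + t : ℤ) : ℚ) with hw
  have hprod : ∏ j ∈ range m, ((((k + 1) * (x - 1 + h) + t : ℤ) : ℚ) + (k + 1) * (j + 1))
      = ∏ j ∈ range m, (w + (k + 1) * j) :=
    prod_congr rfl fun j _ => by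
      rw [hw]
      push_cast
      ring
  have htel : (∏ j ∈ range m, (w + (k + 1) * j)) * (w + (k + 1) * m)
      = (∏ j ∈ range m, (w + (k + 1) * (j + 1))) * w := by
    rw [← prod_range_succ (fun j : ℕ => w + (k + 1) * j), prod_range_succ']
    push_cast
    ring
  rw [hprod]
  generalize poch (x : ℚ) _ = P at hpoch ⊢
  generalize poch ((x : ℚ) + 1) _ = Q at hpoch ⊢
  generalize ∏ j ∈ range m, (w + (k + 1) * j) = A at htel ⊢
  generalize ∏ j ∈ range m, (w + (k + 1) * (j + 1)) = B at htel ⊢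
  rw [hw] at htel
  push_cast at hpoch htel ⊢
  linear_combination (A * (((k : ℚ) + 1) * (x + h) + t + (k + 1) * m)) * hpoch + (x * Q) * htel

theorem Phi_ratio_second_general (k l : ℕ) (a : ℕ → ℤ) (t x h : ℤ)
    (hl : 1 ≤ l) (ht : 1 ≤ t) (hx : 1 ≤ x) (hh : 0 ≤ h)
    (hmono : ∀ i j : ℕ, 1 ≤ i → i < j → j ≤ l → a i < a j)
    (hpos : ∀ i ∈ Finset.Icc 1 l, 1 ≤ a i)
    (hal : a l = h + (l : ℤ)) :
    Phi k (l - 1) a (t - 1) (x + 1) h * Phi k l a t (x - 1) h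
        / (Phi k (l - 1) a (t - 1) x h * Phi k l a t x h)
      = (x : ℚ) * (((k : ℚ) + 1) * (x : ℚ) + ((k : ℚ) + 1) * (h : ℚ) + (t : ℚ))
        / ((((k : ℚ) + 1) * ((x : ℚ) + (l : ℚ) + (h : ℚ) - 1) + (t : ℚ))
          * ((x : ℚ) + (t : ℚ) + (k : ℚ) * ((l : ℚ) - 1) + ((k : ℚ) + 1) * (h : ℚ))) := by
  have ha : ∀ i ∈ Icc 1 l, 1 ≤ a i ∧ a i ≤ h + l := fun i hi => by
    rcases (mem_Icc.1 hi).2.lt_or_eq with hil | rfl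
    · exact ⟨hpos i hi, by linarith [hmono i l (mem_Icc.1 hi).1 hil le_rfl]⟩
    · exact ⟨hpos i hi, hal.le⟩
  have ha' : ∀ i ∈ Icc 1 (l - 1), 1 ≤ a i ∧ a i ≤ h + (l - 1 : ℕ) := fun i hi => by
    rw [mem_Icc] at hi
    have := hmono i l hi.1 (by omega) le_rfl
    exact ⟨hpos i (mem_Icc.2 ⟨hi.1, by omega⟩), by push_cast [Nat.cast_sub hl]; linarith⟩
  have hΦ₁ := Phi_pos k (l - 1) a (t := t - 1) (x := x) (by omega) hh (by omega) ha'
  have hΦ₂ := Phi_pos k l a (t := t) (x := x) (by omega) hh (by omega) ha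
  have hden : 0 < (((k : ℚ) + 1) * ((x : ℚ) + l + h - 1) + t)
      * ((x : ℚ) + t + k * ((l : ℚ) - 1) + (k + 1) * h) := by
    qify at hl hx ht hh
    apply mul_pos <;> nlinarith
  have hn : 0 ≤ t + (k + 1) * (h + l) - l - k := by
    nlinarith [mul_nonneg (Int.natCast_nonneg k) (by omega : (0 : ℤ) ≤ h + l - 1)]
  rw [div_eq_div_iff (mul_pos hΦ₁ hΦ₂).ne' hden.ne']
  simp only [Phi_eq_div]
  rw [phiNumer_peel k hl hal t (x - 1), phiNumer_peel k hl hal t x,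
    show x - 1 + h + 1 = x + h by ring, show x + 1 + h = x + h + 1 by ring]
  linear_combination
    (phiNumer k (l - 1) a (t - 1) (x + h + 1) * phiNumer k (l - 1) a (t - 1) (x + h)
      / (phiNumer k (l - 1) a (t - 1) h * phiNumer k l a t h)) * peelFactor_sub_one k hl hn x

/-- Simplification of the second ratio in the Kuo recurrence: with `a 1 = 1`,
`a l = h + l`, `l ≥ 1`, `t ≥ 1`, `x ≥ 1`, the ratio
`Φ_k((a_j)_{j=1}^{l-1}; t-1,x+1,h)·Φ_k((a_j)_{j=1}^l; t,x-1,h) /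
 (Φ_k((a_j)_{j=1}^{l-1}; t-1,x,h)·Φ_k((a_j)_{j=1}^l; t,x,h))`
equals `x((k+1)x+(k+1)h+t) / (((k+1)(x+l+h-1)+t)(x+t+k(l-1)+(k+1)h))`. -/
theorem Phi_ratio_second (k l : ℕ) (a : ℕ → ℤ) (t x h : ℤ)
    (hl : 1 ≤ l) (ht : 1 ≤ t) (hx : 1 ≤ x) (hh : 0 ≤ h)
    (hmono : ∀ i j : ℕ, 1 ≤ i → i < j → j ≤ l → a i < a j)
    (hpos : ∀ i ∈ Finset.Icc 1 l, 1 ≤ a i)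
    (ha1 : a 1 = 1) (hal : a l = h + (l : ℤ)) :
    Phi k (l - 1) a (t - 1) (x + 1) h * Phi k l a t (x - 1) h
        / (Phi k (l - 1) a (t - 1) x h * Phi k l a t x h)
      = (x : ℚ) * (((k : ℚ) + 1) * (x : ℚ) + ((k : ℚ) + 1) * (h : ℚ) + (t : ℚ))
        / ((((k : ℚ) + 1) * ((x : ℚ) + (l : ℚ) + (h : ℚ) - 1) + (t : ℚ))
          * ((x : ℚ) + (t : ℚ) + (k : ℚ) * ((l : ℚ) - 1) + ((k : ℚ) + 1) * (h : ℚ))) :=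
  Phi_ratio_second_general k l a t x h hl ht hx hh hmono hpos hal
end

section
/- For positive integers a, b, c, the triple product ∏_{i=1}^a ∏_{j=1}^b ∏_{k=1}^c (i+j+k-1)/(i+j+k-2) is a positive integer. -/
/-!
Telescoping in `k` turns the product into `∏_{i<a, j<b} (i+j+c+1)/(i+j+1)`, so it suffices that the
denominator divides the numerator. Counting `p`-adic valuations as numbers of prime powers dividing,
this holds once every `m ≥ 1` divides at most as many of the factors `i+j+1` as of the factors
`i+j+c+1`. For fixed `i`, the number of `j < b` with `m ∣ i+t+j+1` is `b / m`, plus one exactly when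
`(i+t) % m` is one of the top `b % m` residues; and among `a` consecutive integers, the block
starting at `0` meets the top residues least often.
-/

open Finset

namespace Nat

theorem sum_factorization_eq_sum_card_filter_pow_dvd {ι : Type*} {s : Finset ι} {f : ι → ℕ}
    (hf : ∀ i ∈ s, f i ≠ 0) {p L : ℕ} (hp : p.Prime) (hL : ∀ i ∈ s, f i ≤ p ^ L) :
    ∑ i ∈ s, (f i).factorization p = ∑ k ∈ Icc 1 L, #{i ∈ s | p ^ k ∣ f i} := by
  calc ∑ i ∈ s, (f i).factorization p = ∑ i ∈ s, #{k ∈ Icc 1 L | p ^ k ∣ f i} :=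
        sum_congr rfl fun i hi ↦ by
          rw [factorization_eq_card_pow_dvd _ hp, Ico_filter_pow_dvd_eq hp (hf i hi) (hL i hi)]
    _ = ∑ k ∈ Icc 1 L, #{i ∈ s | p ^ k ∣ f i} := by
        simp only [card_filter]
        exact sum_comm

theorem count_le_mod_add_eq {m r : ℕ} (hr : r ≤ m) (n : ℕ) :
    count (fun x ↦ m ≤ x % m + r) n = n / m * r + (n % m + r - m) := by
  rcases eq_zero_or_pos m with rfl | hm
  · simp [Nat.le_zero.1 hr, count_true]
  induction n with
  | zero => simp only [count_zero, Nat.zero_div, zero_mul, Nat.zero_mod, zero_add]; omega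
  | succ n ih =>
    rw [count_succ, ih]
    have hn := div_add_mod n m
    have hlt := mod_lt n hm
    by_cases hwrap : n % m + 1 = m
    · obtain ⟨hq, hρ⟩ := (Nat.div_mod_unique hm).2
        (show 0 + m * (n / m + 1) = n + 1 ∧ 0 < m from ⟨by rw [mul_add]; omega, hm⟩)
      rw [hq, hρ, add_mul, one_mul]
      split_ifs <;> omega
    · obtain ⟨hq, hρ⟩ := (Nat.div_mod_unique hm).2
        (show n % m + 1 + m * (n / m) = n + 1 ∧ n % m + 1 < m by omega)
      rw [hq, hρ]
      split_ifs <;> omega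

theorem count_le_mod_add_add_count_le {m r : ℕ} (hr : r ≤ m) (s n : ℕ) :
    count (fun x ↦ m ≤ x % m + r) s + count (fun x ↦ m ≤ x % m + r) n ≤
      count (fun x ↦ m ≤ x % m + r) (s + n) := by
  rcases eq_zero_or_pos m with rfl | hm
  · simp [count_true]
  simp only [count_le_mod_add_eq hr]
  have hs := div_add_mod s m
  have hn := div_add_mod n m
  have hs' := mod_lt s hm
  have hn' := mod_lt n hm
  by_cases hwrap : m ≤ s % m + n % m
  · obtain ⟨hq, hρ⟩ := (Nat.div_mod_unique hm).2
      (show s % m + n % m - m + m * (s / m + n / m + 1) = s + n ∧ s % m + n % m - m < m from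
        ⟨by rw [mul_add, mul_add]; omega, by omega⟩)
    rw [hq, hρ, add_mul, add_mul, one_mul]
    omega
  · obtain ⟨hq, hρ⟩ := (Nat.div_mod_unique hm).2
      (show s % m + n % m + m * (s / m + n / m) = s + n ∧ s % m + n % m < m from
        ⟨by rw [mul_add]; omega, by omega⟩)
    rw [hq, hρ, add_mul]
    omega

theorem count_le_mod_add_le_count_shift {m r : ℕ} (hr : r ≤ m) (t n : ℕ) :
    count (fun x ↦ m ≤ x % m + r) n ≤ count (fun x ↦ m ≤ (t + x) % m + r) n := by
  have hsplit := count_le_mod_add_add_count_le hr t n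
  rw [count_add] at hsplit
  omega

theorem card_multiples_add_left (x n p : ℕ) :
    #{e ∈ range n | p ∣ x + e + 1} = (x + n) / p - x / p := by
  have h := card_multiples (x + n) p
  rw [card_filter, sum_range_add, ← card_filter, ← card_filter, card_multiples] at h
  omega

theorem card_product_multiples_eq {m : ℕ} (hm : 0 < m) (a b t : ℕ) :
    #{p ∈ range a ×ˢ range b | m ∣ p.1 + p.2 + t + 1} =
      a * (b / m) + count (fun i ↦ m ≤ (t + i) % m + b % m) a := by
  calc #{p ∈ range a ×ˢ range b | m ∣ p.1 + p.2 + t + 1}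
      = ∑ i ∈ range a, #{j ∈ range b | m ∣ (t + i) + j + 1} := by
        simp only [card_filter, sum_product, add_comm t, add_right_comm _ t]
    _ = ∑ i ∈ range a, (b / m + if m ≤ (t + i) % m + b % m then 1 else 0) :=
        sum_congr rfl fun i _ ↦ by
          rw [card_multiples_add_left, Nat.add_div (a := t + i) hm, add_assoc, Nat.add_sub_cancel_left]
    _ = a * (b / m) + count (fun i ↦ m ≤ (t + i) % m + b % m) a := by
        rw [sum_add_distrib, sum_const, card_range, smul_eq_mul, count_eq_card_filter_range,
          card_filter]

theorem card_product_multiples_le {m : ℕ} (hm : 0 < m) (a b c : ℕ) :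
    #{p ∈ range a ×ˢ range b | m ∣ p.1 + p.2 + 1} ≤
      #{p ∈ range a ×ˢ range b | m ∣ p.1 + p.2 + c + 1} := by
  have h₀ := card_product_multiples_eq hm a b 0
  simp only [add_zero, zero_add] at h₀
  rw [h₀, card_product_multiples_eq hm]
  exact Nat.add_le_add_left (count_le_mod_add_le_count_shift (mod_lt b hm).le c a) _

end Nat

theorem Finset.prod_dvd_prod_of_card_filter_dvd_le {ι κ : Type*} {s : Finset ι} {t : Finset κ}
    {f : ι → ℕ} {g : κ → ℕ} (hf : ∀ i ∈ s, f i ≠ 0) (hg : ∀ j ∈ t, g j ≠ 0)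
    (h : ∀ m, 0 < m → #{i ∈ s | m ∣ f i} ≤ #{j ∈ t | m ∣ g j}) :
    ∏ i ∈ s, f i ∣ ∏ j ∈ t, g j := by
  rw [← Nat.factorization_prime_le_iff_dvd (prod_ne_zero_iff.2 hf) (prod_ne_zero_iff.2 hg)]
  intro p hp
  set L := ∑ i ∈ s, f i + ∑ j ∈ t, g j
  have hL : L < p ^ L := Nat.lt_pow_self hp.one_lt
  have hfL : ∀ i ∈ s, f i ≤ p ^ L := fun i hi ↦
    ((single_le_sum (fun _ _ ↦ Nat.zero_le _) hi).trans (Nat.le_add_right _ _)).trans hL.le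
  have hgL : ∀ j ∈ t, g j ≤ p ^ L := fun j hj ↦
    ((single_le_sum (fun _ _ ↦ Nat.zero_le _) hj).trans (Nat.le_add_left _ _)).trans hL.le
  rw [Nat.factorization_prod hf, Nat.factorization_prod hg, Finsupp.finsetSum_apply,
    Finsupp.finsetSum_apply, Nat.sum_factorization_eq_sum_card_filter_pow_dvd hf hp hfL,
    Nat.sum_factorization_eq_sum_card_filter_pow_dvd hg hp hgL]
  exact sum_le_sum fun k _ ↦ h _ (pow_pos hp.pos k)

theorem Finset.prod_range_div_of_ne_zero {G : Type*} [CommGroupWithZero G] {f : ℕ → G}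
    (hf : ∀ k, f k ≠ 0) (n : ℕ) : ∏ k ∈ range n, f (k + 1) / f k = f n / f 0 := by
  simpa using congrArg Units.val (prod_range_div (fun k ↦ Units.mk0 (f k) (hf k)) n)

theorem Finset.prod_Icc_one_eq_prod_range {M : Type*} [CommMonoid M] (f : ℕ → M) (n : ℕ) :
    ∏ i ∈ Icc 1 n, f i = ∏ i ∈ range n, f (i + 1) := by
  rw [← Ico_add_one_right_eq_Icc, range_eq_Ico, prod_Ico_add']

theorem macmahonProd_eq_prod_range (a b c : ℕ) :
    ∏ i ∈ Icc 1 a, ∏ j ∈ Icc 1 b, ∏ k ∈ Icc 1 c,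
        ((i : ℚ) + j + k - 1) / ((i : ℚ) + j + k - 2) =
      ∏ i ∈ range a, ∏ j ∈ range b, ((i + j + c + 1 : ℕ) : ℚ) / ((i + j + 1 : ℕ) : ℚ) := by
  rw [prod_Icc_one_eq_prod_range]
  refine prod_congr rfl fun i _ ↦ ?_
  rw [prod_Icc_one_eq_prod_range]
  refine prod_congr rfl fun j _ ↦ ?_
  rw [prod_Icc_one_eq_prod_range]
  convert prod_range_div_of_ne_zero (f := fun k : ℕ ↦ (i + j + 1 + k : ℚ)) (fun k ↦ by positivity) c
    using 2 <;> push_cast <;> ring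

theorem macmahonProd_is_pos_integer_general (a b c : ℕ) :
    ∃ n : ℕ, 0 < n ∧
      (∏ i ∈ Finset.Icc 1 a, ∏ j ∈ Finset.Icc 1 b, ∏ k ∈ Finset.Icc 1 c,
        ((i : ℚ) + j + k - 1) / ((i : ℚ) + j + k - 2)) = (n : ℚ) := by
  set s := range a ×ˢ range b
  set num := ∏ p ∈ s, (p.1 + p.2 + c + 1)
  set den := ∏ p ∈ s, (p.1 + p.2 + 1)
  have hden : 0 < den := prod_pos fun _ _ ↦ Nat.succ_pos _
  have hdvd : den ∣ num := prod_dvd_prod_of_card_filter_dvd_le (by simp) (by simp)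
    fun m hm ↦ Nat.card_product_multiples_le hm a b c
  refine ⟨num / den, Nat.div_pos (Nat.le_of_dvd (prod_pos fun _ _ ↦ Nat.succ_pos _) hdvd) hden, ?_⟩
  rw [Nat.cast_div hdvd (by positivity), Nat.cast_prod, Nat.cast_prod, ← prod_div_distrib,
    prod_product, macmahonProd_eq_prod_range]

/-- For positive integers `a, b, c`, MacMahon's triple product
`∏_{i=1}^a ∏_{j=1}^b ∏_{k=1}^c (i+j+k-1)/(i+j+k-2)` is a positive integer. -/
theorem macmahonProd_is_pos_integer (a b c : ℕ) (ha : 0 < a) (hb : 0 < b) (hc : 0 < c) :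
    ∃ n : ℕ, 0 < n ∧
      (∏ i ∈ Finset.Icc 1 a, ∏ j ∈ Finset.Icc 1 b, ∏ k ∈ Finset.Icc 1 c,
        ((i : ℚ) + j + k - 1) / ((i : ℚ) + j + k - 2)) = (n : ℚ) :=
  macmahonProd_is_pos_integer_general a b c
end

section
/- Let l ≥ 1 and let (a_i)_{i=1}^l be a strictly increasing sequence of positive integers with a_1 > 1 and a_l ≤ h + l. With f_{x,t,h} as in the main theorem's product formula, one has f_{x,t,h}(a_1,…,a_l) = f_{x, t+(k+1)(a_1-1), h+1-a_1}(1, a_2-a_1+1, …, a_l-a_1+1). -/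
open Finset

/-- The conjectured tiling formula `f_{x,t,h}(a_1,…,a_l)` of the main theorem:
`f = Φ_k((a_j)_{j=1}^l; t,x,h) · ∏_{i=1}^l Φ_k((a_j)_{j=1}^i; t, a_{i+1}-a_i-1, a_{i+1}-i-1)`,
with the convention `a_{l+1} = l + h + 1` built in. -/
noncomputable def tilingF (k l : ℕ) (a : ℕ → ℤ) (t x h : ℤ) : ℚ :=
  let a' : ℕ → ℤ := fun i => if i = l + 1 then (l : ℤ) + h + 1 else a i
  Phi k l a' t x h *
    ∏ i ∈ Finset.Icc 1 l,
      Phi k i a' t (a' (i + 1) - a' i - 1) (a' (i + 1) - (i : ℤ) - 1)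

/-! Every Pochhammer argument and index in `Φ_k` involves the dents `a_i`, the parameter `t`
and the height `h` only through `h - a_i`, `t + (k+1) a_i` and `(k+1) h + t`. Translating all
dents down by `s` while replacing `t` by `t + (k+1) s` and `h` by `h - s` therefore leaves `Φ_k`
unchanged, and the padded dent `a_{l+1} = l + h + 1` of `f` moves down by `s` as well. The
reduction is the case `s = a_1 - 1`. -/

theorem Phi_translate (k m : ℕ) (a : ℕ → ℤ) (s t x h : ℤ) :
    Phi k m (fun i => a i - s) (t + ((k : ℤ) + 1) * s) x (h - s) = Phi k m a t x h := by
  unfold Phi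
  congr 1
  · congr 1
    · refine prod_congr rfl fun i _ => ?_
      congr 1 <;> congr 1 <;> push_cast <;> ring
    · refine prod_congr rfl fun j _ => prod_congr rfl fun i _ => ?_
      congr 1 <;> congr 1 <;> push_cast <;> ring
  · refine prod_congr rfl fun i _ => ?_
    congr 1 <;> congr 1 <;> push_cast <;> ring

theorem tilingF_eq_of_pad (k l : ℕ) (a a' : ℕ → ℤ) (t x h : ℤ)
    (ha' : ∀ i, a' i = if i = l + 1 then (l : ℤ) + h + 1 else a i) :
    tilingF k l a t x h = Phi k l a' t x h *
      ∏ i ∈ Icc 1 l, Phi k i a' t (a' (i + 1) - a' i - 1) (a' (i + 1) - (i : ℤ) - 1) := by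
  obtain rfl : a' = _ := funext ha'
  rfl

theorem tilingF_translate (k l : ℕ) (a : ℕ → ℤ) (s t x h : ℤ) :
    tilingF k l (fun i => a i - s) (t + ((k : ℤ) + 1) * s) x (h - s) = tilingF k l a t x h := by
  set A : ℕ → ℤ := fun i => if i = l + 1 then (l : ℤ) + h + 1 else a i
  rw [tilingF_eq_of_pad k l a A t x h fun _ => rfl,
    tilingF_eq_of_pad k l _ (fun i => A i - s) _ x _ fun i => by simp only [A]; split <;> ring]
  congr 1
  · exact Phi_translate k l A s t x h
  · refine prod_congr rfl fun i _ => ?_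
    rw [← Phi_translate k i A s t (A (i + 1) - A i - 1) (A (i + 1) - i - 1)]
    congr 1 <;> ring

theorem tilingF_bottom_reduction_general (k l : ℕ) (a : ℕ → ℤ) (t x h : ℤ) :
    tilingF k l a t x h
      = tilingF k l (fun i => a i - a 1 + 1) (t + ((k : ℤ) + 1) * (a 1 - 1)) x
          (h + 1 - a 1) := by
  rw [← tilingF_translate k l a (a 1 - 1) t x h, sub_sub_eq_add_sub]
  simp only [sub_add]

/-- Consistency of the product formula under the forced-lozenge reduction used when
`a_1 > 1`: `f_{x,t,h}(a_1,…,a_l)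
  = f_{x, t+(k+1)(a_1-1), h+1-a_1}(1, a_2-a_1+1, …, a_l-a_1+1)`. -/
theorem tilingF_bottom_reduction (k l : ℕ) (a : ℕ → ℤ) (t x h : ℤ)
    (hl : 1 ≤ l) (ht : 0 ≤ t) (hx : 0 ≤ x) (hh : 0 ≤ h)
    (hmono : ∀ i j : ℕ, 1 ≤ i → i < j → j ≤ l → a i < a j)
    (hpos : ∀ i ∈ Finset.Icc 1 l, 1 ≤ a i)
    (ha1 : 1 < a 1) (hal : a l ≤ h + (l : ℤ)) (hha : a 1 ≤ h + 1) :
    tilingF k l a t x h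
      = tilingF k l (fun i => a i - a 1 + 1) (t + ((k : ℤ) + 1) * (a 1 - 1)) x
          (h + 1 - a 1) :=
  tilingF_bottom_reduction_general k l a t x h
end
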